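/- Let n ≥ 1, let 0 < τ₁ < τ₂ be temperatures with τ_δ = 1/τ₁ − 1/τ₂, let L ∈ ℝ^{n×n} be symmetric, let c ≥ 0, and let U : ℝⁿ → ℝ be continuously differentiable. Then for every twice continuously differentiable f : ℝⁿ × ℝⁿ → ℝ, the Carré du Champ operator Γᶜ(f) = (1/2)𝓛ᶜ(f²) − f·𝓛ᶜ(f) satisfies, pointwise in (x,y), Γᶜ(f)(x,y) = τ₁ (L∇ₓf(x,y))·∇ₓf(x,y) + τ₂ (L∇_yf(x,y))·∇_yf(x,y) + (c/2) s(x,y) (f(y,x) − f(x,y))². -/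

import Mathlib

open MeasureTheory Matrix

/-- The swap function `s(x,y) = min{1, exp(τ_δ (U(x) − U(y)))}` with `τ_δ = 1/τ₁ − 1/τ₂`. -/
noncomputable def swapS {n : ℕ} (τ₁ τ₂ : ℝ) (U : (Fin n → ℝ) → ℝ) (x y : Fin n → ℝ) : ℝ :=
  min 1 (Real.exp ((1 / τ₁ - 1 / τ₂) * (U x - U y)))

/-- The gradient vector of `h : ℝⁿ → ℝ` at `x`, with components `∂h/∂x_i(x)`. -/
noncomputable def gradVec {n : ℕ} (h : (Fin n → ℝ) → ℝ) (x : Fin n → ℝ) : Fin n → ℝ :=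
  fun i => fderiv ℝ h x (Pi.single i 1)

/-- The generator `𝓛ᶜ` of the replica exchange preconditioned Langevin jump process. -/
noncomputable def repGen {n : ℕ} (L : Matrix (Fin n) (Fin n) ℝ) (τ₁ τ₂ c : ℝ)
    (U : (Fin n → ℝ) → ℝ) (f : (Fin n → ℝ) → (Fin n → ℝ) → ℝ) (x y : Fin n → ℝ) : ℝ :=
  -((L.mulVec (gradVec U x)) ⬝ᵥ (gradVec (fun x' => f x' y) x))
    + τ₁ * ∑ i, ∑ j, L i j *
        gradVec (fun x' => gradVec (fun x'' => f x'' y) x' j) x i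
    - (L.mulVec (gradVec U y)) ⬝ᵥ (gradVec (f x) y)
    + τ₂ * ∑ i, ∑ j, L i j *
        gradVec (fun y' => gradVec (f x) y' j) y i
    + c * swapS τ₁ τ₂ U x y * (f y x - f x y)

/-!
The generator is the sum of two preconditioned Langevin generators, one acting on each replica,
and of a jump part. The carré du champ is additive over these pieces: for a diffusion part the
product rule, applied once to the drift and twice to the second-order term, leaves only
`τ (L∇h)·∇h`, while for the jump part it reduces to `(b² − a²)/2 − a (b − a) = (b − a)²/2`.
-/

section Generator

variable {n : ℕ}

section Gradient

variable {h k : (Fin n → ℝ) → ℝ} {z : Fin n → ℝ}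

lemma gradVec_mul (hh : DifferentiableAt ℝ h z) (hk : DifferentiableAt ℝ k z) (j : Fin n) :
    gradVec (fun w => h w * k w) z j = h z * gradVec k z j + k z * gradVec h z j := by
  simp only [gradVec, fderiv_fun_mul hh hk, _root_.add_apply,
    _root_.smul_apply, smul_eq_mul]

lemma gradVec_const_mul (hh : DifferentiableAt ℝ h z) (a : ℝ) (j : Fin n) :
    gradVec (fun w => a * h w) z j = a * gradVec h z j := by
  simp only [gradVec, ← smul_eq_mul (a := a), fderiv_fun_const_smul hh,
    _root_.smul_apply]

lemma gradVec_sq (hh : DifferentiableAt ℝ h z) (j : Fin n) :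
    gradVec (fun w => h w ^ 2) z j = 2 * (h z * gradVec h z j) := by
  simp only [pow_two, gradVec_mul hh hh]
  ring

lemma ContDiff.differentiable_gradVec (hh : ContDiff ℝ 2 h) (j : Fin n) :
    Differentiable ℝ (fun w => gradVec h w j) :=
  ((hh.fderiv_right (m := 1) (by norm_num)).differentiable (by norm_num)).clm_apply
    (differentiable_const _)

lemma gradVec_gradVec_sq (hh : ContDiff ℝ 2 h) (x : Fin n → ℝ) (i j : Fin n) :
    gradVec (fun z => gradVec (fun w => h w ^ 2) z j) x i
      = 2 * (gradVec h x i * gradVec h x j + h x * gradVec (fun z => gradVec h z j) x i) := by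
  have hd : Differentiable ℝ h := hh.differentiable (by norm_num)
  have hgrad := hh.differentiable_gradVec j
  simp only [gradVec_sq (hd _)]
  rw [gradVec_const_mul ((hd x).fun_mul (hgrad x)), gradVec_mul (hd x) (hgrad x)]
  ring

end Gradient

noncomputable def langevinGen (L : Matrix (Fin n) (Fin n) ℝ) (τ : ℝ) (U h : (Fin n → ℝ) → ℝ)
    (x : Fin n → ℝ) : ℝ :=
  -((L *ᵥ gradVec U x) ⬝ᵥ gradVec h x)
    + τ * ∑ i, ∑ j, L i j * gradVec (fun z => gradVec h z j) x i

lemma repGen_eq_langevinGen_add (L : Matrix (Fin n) (Fin n) ℝ) (τ₁ τ₂ c : ℝ)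
    (U : (Fin n → ℝ) → ℝ) (f : (Fin n → ℝ) → (Fin n → ℝ) → ℝ) (x y : Fin n → ℝ) :
    repGen L τ₁ τ₂ c U f x y
      = langevinGen L τ₁ U (fun x' => f x' y) x + langevinGen L τ₂ U (f x) y
        + c * swapS τ₁ τ₂ U x y * (f y x - f x y) := by
  simp only [repGen, langevinGen]
  ring

lemma sum_sum_mul_eq_mulVec_dotProduct (L : Matrix (Fin n) (Fin n) ℝ) (g : Fin n → ℝ) :
    ∑ i, ∑ j, L i j * (g i * g j) = (L *ᵥ g) ⬝ᵥ g := by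
  simp only [mulVec, dotProduct, Finset.sum_mul]
  exact Finset.sum_congr rfl fun i _ => Finset.sum_congr rfl fun j _ => by ring

theorem langevinGen_carreDuChamp (L : Matrix (Fin n) (Fin n) ℝ) (τ : ℝ)
    (U : (Fin n → ℝ) → ℝ) {h : (Fin n → ℝ) → ℝ} (hh : ContDiff ℝ 2 h) (x : Fin n → ℝ) :
    (1 / 2) * langevinGen L τ U (fun z => h z ^ 2) x - h x * langevinGen L τ U h x
      = τ * ((L *ᵥ gradVec h x) ⬝ᵥ gradVec h x) := by
  have hd : Differentiable ℝ h := hh.differentiable (by norm_num)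
  have hgrad_sq : gradVec (fun z => h z ^ 2) x = (2 * h x) • gradVec h x := by
    funext j
    rw [gradVec_sq (hd x), Pi.smul_apply, smul_eq_mul, mul_assoc]
  have hsecond : ∑ i, ∑ j, L i j * gradVec (fun z => gradVec (fun w => h w ^ 2) z j) x i
      = 2 * ((L *ᵥ gradVec h x) ⬝ᵥ gradVec h x)
        + 2 * h x * ∑ i, ∑ j, L i j * gradVec (fun z => gradVec h z j) x i := by
    simp only [gradVec_gradVec_sq hh, ← sum_sum_mul_eq_mulVec_dotProduct, Finset.mul_sum,
      ← Finset.sum_add_distrib]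
    exact Finset.sum_congr rfl fun i _ => Finset.sum_congr rfl fun j _ => by ring
  simp only [langevinGen, hgrad_sq, dotProduct_smul, smul_eq_mul, hsecond]
  ring

end Generator

theorem carre_du_champ_repGen_general (n : ℕ)
    (τ₁ τ₂ : ℝ)
    (L : Matrix (Fin n) (Fin n) ℝ)
    (c : ℝ)
    (U : (Fin n → ℝ) → ℝ)
    (f : (Fin n → ℝ) → (Fin n → ℝ) → ℝ)
    (hf : ContDiff ℝ 2 (Function.uncurry f)) :
    ∀ x y : Fin n → ℝ,
      (1 / 2) * repGen L τ₁ τ₂ c U (fun x' y' => (f x' y') ^ 2) x y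
          - f x y * repGen L τ₁ τ₂ c U f x y
        = τ₁ * ((L.mulVec (gradVec (fun x' => f x' y) x)) ⬝ᵥ (gradVec (fun x' => f x' y) x))
          + τ₂ * ((L.mulVec (gradVec (f x) y)) ⬝ᵥ (gradVec (f x) y))
          + (c / 2) * swapS τ₁ τ₂ U x y * (f y x - f x y) ^ 2 := by
  intro x y
  have hfirst : ContDiff ℝ 2 (fun x' => f x' y) := hf.comp (contDiff_id.prodMk contDiff_const)
  have hsecond : ContDiff ℝ 2 (f x) := hf.comp (contDiff_const.prodMk contDiff_id)
  rw [repGen_eq_langevinGen_add, repGen_eq_langevinGen_add]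
  linear_combination langevinGen_carreDuChamp L τ₁ U hfirst x
    + langevinGen_carreDuChamp L τ₂ U hsecond y

/-- Pointwise formula for the Carré du Champ operator
`Γᶜ(f) = (1/2)𝓛ᶜ(f²) − f 𝓛ᶜ(f)` of the replica exchange generator:
`Γᶜ(f)(x,y) = τ₁ (L∇ₓf)·∇ₓf + τ₂ (L∇_yf)·∇_yf + (c/2) s(x,y) (f(y,x) − f(x,y))²`. -/
theorem carre_du_champ_repGen (n : ℕ) (hn : 1 ≤ n)
    (τ₁ τ₂ : ℝ) (hτ₁ : 0 < τ₁) (hτ₁₂ : τ₁ < τ₂)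
    (L : Matrix (Fin n) (Fin n) ℝ) (hL : L.IsSymm)
    (c : ℝ) (hc : 0 ≤ c)
    (U : (Fin n → ℝ) → ℝ) (hU : ContDiff ℝ 1 U)
    (f : (Fin n → ℝ) → (Fin n → ℝ) → ℝ)
    (hf : ContDiff ℝ 2 (Function.uncurry f)) :
    ∀ x y : Fin n → ℝ,
      (1 / 2) * repGen L τ₁ τ₂ c U (fun x' y' => (f x' y') ^ 2) x y
          - f x y * repGen L τ₁ τ₂ c U f x y
        = τ₁ * ((L.mulVec (gradVec (fun x' => f x' y) x)) ⬝ᵥ (gradVec (fun x' => f x' y) x))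
          + τ₂ * ((L.mulVec (gradVec (f x) y)) ⬝ᵥ (gradVec (f x) y))
          + (c / 2) * swapS τ₁ τ₂ U x y * (f y x - f x y) ^ 2 :=
  carre_du_champ_repGen_general n τ₁ τ₂ L c U f hf
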